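/- arXiv:1412.4273 — 5 statements merged into one kernel-verified Lean document; each statement's English description precedes it below -/
import Mathlib

section
/- Let M be an n₀×n₀ array of cells, where each cell (x,y) contains a finite multiset of jobs, such that every row contains exactly m jobs in total and every column contains exactly m jobs in total (counted with multiplicity). Then the jobs can be colored with m colors so that in every row all m jobs have pairwise distinct colors and in every column all m jobs have pairwise distinct colors. -/
/-!
This is König's edge-colouring theorem for `m`-regular bipartite multigraphs (rows on one side,
columns on the other, one edge per job). Double counting gives Hall's condition, so there is a
perfect matching: a set of jobs with exactly one job in every row and every column. Giving these
jobs a new colour and removing them leaves an `(m - 1)`-regular array, which is coloured by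
induction.
-/

open Finset Function

variable {ι κ α β : Type*}

lemma card_filter_mem_eq_mul [DecidableEq α] {S : Finset ι} {f : ι → α} {m : ℕ}
    (hf : ∀ a, #{i ∈ S | f i = a} = m) (A : Finset α) :
    #{i ∈ S | f i ∈ A} = #A * m := by
  rw [← sum_card_fiberwise_eq_card_filter, sum_const_nat fun a _ => hf a]

lemma card_eq_card_mul [DecidableEq α] [Fintype α] {S : Finset ι} {f : ι → α} {m : ℕ}
    (hf : ∀ a, #{i ∈ S | f i = a} = m) :
    #S = Fintype.card α * m := by
  simpa using card_filter_mem_eq_mul hf univ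

lemma card_filter_sdiff [DecidableEq ι] {S M : Finset ι} (hMS : M ⊆ S) (p : ι → Prop)
    [DecidablePred p] :
    #{i ∈ S \ M | p i} = #{i ∈ S | p i} - #{i ∈ M | p i} := by
  rw [← card_sdiff_of_subset (filter_subset_filter p hMS)]
  congr 1
  ext i
  simp only [mem_filter, mem_sdiff]
  tauto

lemma card_filter_image_eq_one [DecidableEq ι] [DecidableEq α] [Fintype κ] {g : κ → ι}
    {f : ι → α} (hfg : Bijective (f ∘ g)) (a : α) : #{i ∈ univ.image g | f i = a} = 1 := by
  rw [filter_image, card_image_of_injective _ hfg.1.of_comp, card_eq_one]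
  refine ⟨surjInv hfg.2 a, ?_⟩
  ext k
  simp only [mem_filter, mem_univ, true_and, mem_singleton]
  exact ⟨fun h => hfg.1 (h.trans (surjInv_eq hfg.2 a).symm),
    fun h => h ▸ surjInv_eq hfg.2 a⟩

lemma injOn_of_card_filter_eq_one [DecidableEq α] {M : Finset ι} {f : ι → α}
    (hM : ∀ a, #{i ∈ M | f i = a} = 1) : Set.InjOn f M := fun i hi j hj h =>
  card_le_one.1 (hM (f i)).le i (mem_filter.2 ⟨hi, rfl⟩) j (mem_filter.2 ⟨hj, h.symm⟩)

section Regular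

variable [DecidableEq α] [DecidableEq β] {S : Finset ι} {x : ι → α} {y : ι → β} {m : ℕ}

lemma exists_injective_of_regular (hm : 0 < m) (hx : ∀ r, #{i ∈ S | x i = r} = m)
    (hy : ∀ c, #{i ∈ S | y i = c} = m) :
    ∃ f : α → β, Injective f ∧ ∀ r, ∃ i ∈ S, x i = r ∧ y i = f r := by
  set t : α → Finset β := fun r => {i ∈ S | x i = r}.image y
  -- The `#A * m` jobs in the rows `A` all lie in the columns met by `A`, which hold `m` each.
  have hall : ∀ A : Finset α, #A ≤ #(A.biUnion t) := fun A => by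
    refine Nat.le_of_mul_le_mul_right ?_ hm
    rw [← card_filter_mem_eq_mul hx, ← card_filter_mem_eq_mul hy]
    refine card_le_card fun i hi => ?_
    obtain ⟨hiS, hiA⟩ := mem_filter.1 hi
    exact mem_filter.2 ⟨hiS, mem_biUnion.2 ⟨x i, hiA, mem_image_of_mem y (by simp [hiS])⟩⟩
  obtain ⟨f, hf, hft⟩ := (all_card_le_biUnion_card_iff_exists_injective t).1 hall
  refine ⟨f, hf, fun r => ?_⟩
  obtain ⟨i, hi, hyi⟩ := mem_image.1 (hft r)
  exact ⟨i, (mem_filter.1 hi).1, (mem_filter.1 hi).2, hyi⟩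

theorem exists_perfect_matching_of_regular [DecidableEq ι] [Fintype α] [Fintype β] (hm : 0 < m)
    (hx : ∀ r, #{i ∈ S | x i = r} = m) (hy : ∀ c, #{i ∈ S | y i = c} = m) :
    ∃ M ⊆ S, (∀ r, #{i ∈ M | x i = r} = 1) ∧ ∀ c, #{i ∈ M | y i = c} = 1 := by
  obtain ⟨f, hf, hmatch⟩ := exists_injective_of_regular hm hx hy
  choose g hgS hgx hgy using hmatch
  have hcard : Fintype.card α = Fintype.card β :=
    Nat.eq_of_mul_eq_mul_right hm ((card_eq_card_mul hx).symm.trans (card_eq_card_mul hy))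
  have hxg : x ∘ g = id := funext hgx
  have hyg : y ∘ g = f := funext hgy
  have hfbij : Bijective f := (Fintype.bijective_iff_injective_and_card f).2 ⟨hf, hcard⟩
  exact ⟨univ.image g, image_subset_iff.2 fun r _ => hgS r,
    card_filter_image_eq_one (hxg ▸ bijective_id),
    card_filter_image_eq_one (hyg ▸ hfbij)⟩

theorem exists_coloring_of_regular [DecidableEq ι] [Fintype α] [Fintype β]
    (hx : ∀ r, #{i ∈ S | x i = r} = m) (hy : ∀ c, #{i ∈ S | y i = c} = m) :
    ∃ color : ι → ℕ, (∀ i ∈ S, color i < m) ∧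
      ∀ i ∈ S, ∀ j ∈ S, i ≠ j → (x i = x j ∨ y i = y j) → color i ≠ color j := by
  induction m generalizing S with
  | zero =>
    have hS : S = ∅ := card_eq_zero.1 (card_eq_card_mul hx)
    subst hS
    simp
  | succ m ih =>
    obtain ⟨M, hMS, hMx, hMy⟩ := exists_perfect_matching_of_regular m.succ_pos hx hy
    obtain ⟨c, hc_lt, hc⟩ := ih (S := S \ M)
      (fun r => by rw [card_filter_sdiff hMS, hx, hMx]; rfl)
      (fun c => by rw [card_filter_sdiff hMS, hy, hMy]; rfl)
    refine ⟨fun i => if i ∈ M then m else c i, fun i hi => ?_, fun i hi j hj hij hxy => ?_⟩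
    · dsimp only
      split_ifs with hiM
      · exact m.lt_succ_self
      · exact (hc_lt i (mem_sdiff.2 ⟨hi, hiM⟩)).trans m.lt_succ_self
    by_cases hiM : i ∈ M <;> by_cases hjM : j ∈ M <;> simp only [hiM, hjM, if_true, if_false]
    · rcases hxy with h | h
      · exact absurd (injOn_of_card_filter_eq_one hMx hiM hjM h) hij
      · exact absurd (injOn_of_card_filter_eq_one hMy hiM hjM h) hij
    · exact (hc_lt j (mem_sdiff.2 ⟨hj, hjM⟩)).ne'
    · exact (hc_lt i (mem_sdiff.2 ⟨hi, hiM⟩)).ne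
    · exact hc i (mem_sdiff.2 ⟨hi, hiM⟩) j (mem_sdiff.2 ⟨hj, hjM⟩) hij hxy

end Regular

/-- Put `m·n₀` jobs in an `n₀ × n₀` array (job `i` sits at cell `(x i, y i)`), with
exactly `m` jobs in every row and exactly `m` jobs in every column.  Then the jobs
can be colored with `m` colors so that in every row and in every column all jobs
get pairwise distinct colors. -/
theorem stmt3 (m n₀ : ℕ) (x y : Fin (m * n₀) → Fin n₀)
    (hx : ∀ r, (Finset.univ.filter fun i => x i = r).card = m)
    (hy : ∀ c, (Finset.univ.filter fun i => y i = c).card = m) :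
    ∃ color : Fin (m * n₀) → Fin m,
      ∀ i j, i ≠ j → (x i = x j ∨ y i = y j) → color i ≠ color j := by
  obtain ⟨color, hlt, hproper⟩ := exists_coloring_of_regular hx hy
  exact ⟨fun i => ⟨color i, hlt i (mem_univ i)⟩, fun i j hij hxy h =>
    hproper i (mem_univ i) j (mem_univ j) hij hxy (Fin.mk.inj_iff.1 h)⟩
end

section
/- Let B be a positive integer with 4 | B, and define c(j) = (5^{j+1}+1)B/4 and b(j) = 5^{j+1}B. For any j ≥ 1, the only way a sum of four elements from the multiset {c(1), c(1), c(1), c(1), …, c(m), c(m), c(m), c(m)} can equal b(j) + B is the sum of four copies of c(j): 4·c(j) = 5^{j+1}B + B = b(j) + B. -/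
open Finset

/-- With `b(j) = 5^(j+1)·B` and `c(j) = (5^(j+1)+1)·B/4` (`4 ∣ B`, `B > 0`), we
have `4·c(j) = b(j) + B`, and any sum of four `c`-elements (indices in `[1,m]`)
equal to `b(j) + B` must use four copies of `c(j)`. -/
theorem stmt9 (B : ℤ) (hB : 0 < B) (h4 : (4 : ℤ) ∣ B) (m j : ℕ)
    (hj : 1 ≤ j) (hjm : j ≤ m) :
    4 * ((5 ^ (j + 1) + 1) * B / 4) = 5 ^ (j + 1) * B + B ∧
    (∀ f : Fin 4 → ℕ, (∀ t, 1 ≤ f t ∧ f t ≤ m) →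
      (∑ t, (5 ^ (f t + 1) + 1) * B / 4) = 5 ^ (j + 1) * B + B →
      ∀ t, f t = j) := by
  obtain ⟨k, hk⟩ := h4
  have hk0 : 0 < k := by linarith [hB, hk]
  have hdiv : ∀ n : ℕ, ((5:ℤ) ^ n + 1) * B / 4 = (5 ^ n + 1) * k := by
    intro n
    rw [hk, show ((5:ℤ) ^ n + 1) * (4 * k) = 4 * ((5 ^ n + 1) * k) by ring]
    exact Int.mul_ediv_cancel_left _ (by norm_num)
  constructor
  · rw [hdiv, hk]; ring
  · intro f hf hsum
    rw [Finset.sum_congr rfl (fun t _ => hdiv (f t + 1))] at hsum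
    have hsum' : (∑ t : Fin 4, (5:ℤ) ^ (f t + 1)) = 4 * 5 ^ (j + 1) := by
      have e : ∑ t : Fin 4, ((5:ℤ) ^ (f t + 1) + 1) * k
          = (∑ t : Fin 4, (5:ℤ) ^ (f t + 1)) * k + 4 * k := by
        simp [add_mul, Finset.sum_add_distrib, Finset.sum_mul]
      rw [e, hk] at hsum
      have h2 : (∑ t : Fin 4, (5:ℤ) ^ (f t + 1)) * k = (4 * 5 ^ (j + 1)) * k := by
        linear_combination hsum
      exact mul_right_cancel₀ (ne_of_gt hk0) h2
    -- each f t ≤ j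
    have hle : ∀ t : Fin 4, f t ≤ j := by
      intro t
      by_contra hgt
      push_neg at hgt
      have h1 : (5:ℤ) ^ (j + 2) ≤ 5 ^ (f t + 1) :=
        pow_le_pow_right₀ (by norm_num) (by omega)
      have h2 : (5:ℤ) ^ (f t + 1) ≤ ∑ s : Fin 4, (5:ℤ) ^ (f s + 1) :=
        Finset.single_le_sum (f := fun s : Fin 4 => (5:ℤ) ^ (f s + 1)) (fun s _ => by positivity) (Finset.mem_univ t)
      have h3 : (5:ℤ) ^ (j + 2) = 5 * 5 ^ (j + 1) := by ring
      have h4 : (0:ℤ) < 5 ^ (j + 1) := by positivity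
      rw [hsum'] at h2
      linarith
    intro t
    by_contra hne
    have hlt : f t < j := lt_of_le_of_ne (hle t) hne
    have : (∑ s : Fin 4, (5:ℤ) ^ (f s + 1)) < ∑ s : Fin 4, (5:ℤ) ^ (j + 1) := by
      apply Finset.sum_lt_sum (fun s _ => pow_le_pow_right₀ (by norm_num) (by have := hle s; omega))
      exact ⟨t, Finset.mem_univ t, pow_lt_pow_right₀ (by norm_num) (by omega)⟩
    simp [hsum'] at this
end

section
/- (Exchange argument) Let machines 1 and 2 each hold 9 jobs, with regret on a machine given by Z = 4(s(A₁) + w + s(A₂)) + max{s(A₁), s(A₂)}, where w is the half-width of the middle job and A₁, A₂ are the 4-sets of half-widths on either side. Suppose machine 1's middle job has half-width B and one side of machine 1 contains another half-width-B value, while machine 2's middle job has half-width a' < B and all of machine 2's jobs have half-width < B. Exchanging a half-width-B job from machine 1 (not the middle one) with a half-width-a job from machine 2 (a < B), and re-centering so the widest job is in the middle on each machine, changes the total regret by −5(B − a) + 4(B − a) − a + a' = −(B − a') < 0, strictly decreasing the total regret. -/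
/-- Exchange argument: with machine regret `Z = 4(s(A₁) + w + s(A₂)) + s(A₁)`
(widest job, of half-width `w`, in the middle), exchanging a half-width-`B` job
from a side of machine 1 (whose middle job also has half-width `B`) with a
half-width-`a` job from machine 2 (middle half-width `a' < B`, all half-widths
`< B`) and re-centering changes the total regret by
`−5(B−a) + 4(B−a) − a + a' = −(B−a') < 0`. -/
theorem stmt12 (B a a' sA11 sA12 sA21 sA22 : ℝ) (haB : a < B) (ha'B : a' < B) :
    let Z1 := 4 * (sA11 + B + sA12) + sA11
    let Z1' := 4 * ((sA11 - B + a) + B + sA12) + (sA11 - B + a)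
    let Z2 := 4 * (sA21 + a' + sA22) + sA21
    let Z2' := 4 * ((sA21 - a + a') + B + sA22) + (sA21 - a + a')
    (Z1' + Z2') - (Z1 + Z2) = -(5 * (B - a)) + 4 * (B - a) - a + a' ∧
    -(5 * (B - a)) + 4 * (B - a) - a + a' = -(B - a') ∧
    (Z1' + Z2') - (Z1 + Z2) < 0 := by
  refine ⟨by ring, by ring, by nlinarith⟩
end

section
/- Given a YES-instance of 3-PARTITION with integers a₁,…,a_{3m} satisfying Σ a_i = mB and B/4 < a_i < B/2, the constructed 4-PP instance consisting of (a) the a_i, (b) the numbers 5^{j+1}B for j=1,…,m, and (c) four copies of (5^{j+1}+1)B/4 for each j=1,…,m (with 4 | B), is a YES-instance of 4-PARTITION-INTO-PAIRS: taking each solution triplet A_j together with 5^{j+1}B gives a quadruplet of sum (5^{j+1}+1)B, equal to the sum of the four copies of (5^{j+1}+1)B/4. -/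
open Finset

/-- A multiset `M` of `4·M'` integers is a YES-instance of
4-PARTITION-INTO-PAIRS if it splits into `M'` quadruplets that can be arranged
via a fixed-point-free involution into pairs of quadruplets with equal sums. -/
def FourPP (M : Multiset ℤ) (M' : ℕ) : Prop :=
  ∃ (A : Fin M' → Multiset ℤ) (f : Equiv.Perm (Fin M')),
    (∀ i, (A i).card = 4) ∧ (∑ i, A i) = M ∧
    ∀ i, f i ≠ i ∧ f (f i) = i ∧ (A i).sum = (A (f i)).sum

lemma map_eq_sum_singleton {α : Type*} (s : Finset α) (a : α → ℤ) :
    s.val.map a = ∑ k ∈ s, ({a k} : Multiset ℤ) := by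
  rw [Finset.sum, ← Multiset.sum_map_singleton (s.val.map a), Multiset.map_map]
  rfl

/-- Soundness of the reduction: a YES-instance of 3-PARTITION (witnessed by the
triplet assignment `t`) yields a YES-instance of 4-PP on the instance consisting
of the `aᵢ`, the numbers `b(j) = 5^(j+1)·B`, and four copies of
`c(j) = (5^(j+1)+1)·B/4` for `j = 1,…,m`. -/
theorem stmt15 (m : ℕ) (hm : 1 ≤ m) (B : ℤ) (hB : 0 < B) (h4 : (4 : ℤ) ∣ B)
    (a : Fin (3 * m) → ℤ)
    (hrange : ∀ i, B / 4 < a i ∧ a i < B / 2)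
    (hsum : ∑ i, a i = m * B)
    (t : Fin (3 * m) → Fin m)
    (hcard : ∀ j, (Finset.univ.filter fun i => t i = j).card = 3)
    (htrip : ∀ j, (∑ i ∈ Finset.univ.filter fun i => t i = j, a i) = B) :
    FourPP ((Finset.univ.val.map a) +
        ((Multiset.range m).map fun j => 5 ^ (j + 2) * B) +
        ((Multiset.range m).bind fun j =>
          Multiset.replicate 4 ((5 ^ (j + 2) + 1) * B / 4)))
      (2 * m) := by
  classical
  obtain ⟨b', rfl⟩ := h4
  have hcval : ∀ j : ℕ, (5 ^ (j + 2) + 1) * (4 * b') / 4 = (5 ^ (j + 2) + 1) * b' := by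
    intro j
    rw [show (5 ^ (j + 2) + 1 : ℤ) * (4 * b') = ((5 ^ (j + 2) + 1) * b') * 4 by ring,
      Int.mul_ediv_cancel _ (by norm_num)]
  set A' : ℕ → Multiset ℤ := fun n =>
    if n < m then ((univ.filter fun k => ((t k : ℕ) = n)).val.map a)
      + {5 ^ (n + 2) * (4 * b')}
    else Multiset.replicate 4 ((5 ^ (n - m + 2) + 1) * (4 * b') / 4) with hA'
  -- filter conversion
  have hfil : ∀ j : Fin m, (univ.filter fun k => ((t k : ℕ) = (j : ℕ)))
      = (univ.filter fun k => t k = j) := by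
    intro j
    apply Finset.filter_congr
    intro k _
    simp [Fin.ext_iff]
  set g : Fin (2 * m) → Fin (2 * m) := fun i =>
    if h : (i : ℕ) < m then ⟨m + (i : ℕ), by omega⟩
    else ⟨(i : ℕ) - m, by have := i.isLt; omega⟩ with hg'
  have hgval : ∀ i : Fin (2 * m),
      (g i : ℕ) = if (i : ℕ) < m then m + (i : ℕ) else (i : ℕ) - m := by
    intro i
    by_cases h : (i : ℕ) < m <;> simp [hg', h]
  have hg : Function.Involutive g := by
    intro i
    have h1 := hgval i
    have h2 := hgval (g i)
    have := i.isLt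
    apply Fin.ext
    by_cases h : (i : ℕ) < m
    · rw [if_pos h] at h1
      rw [if_neg (by omega : ¬ ((g i : ℕ) < m))] at h2
      omega
    · rw [if_neg h] at h1
      rw [if_pos (by omega : (g i : ℕ) < m)] at h2
      omega
  -- the per-pair sum equality
  have hAsum : ∀ n, n < m → (A' n).sum = (A' (m + n)).sum := by
    intro n hn
    have hL : ((univ.filter fun k => ((t k : ℕ) = n)).val.map a).sum = 4 * b' := by
      rw [hfil ⟨n, hn⟩]
      exact htrip ⟨n, hn⟩
    rw [hA']
    simp only [if_pos hn, if_neg (by omega : ¬ m + n < m)]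
    rw [Multiset.sum_add, hL, Multiset.sum_singleton, Multiset.sum_replicate,
      Nat.add_sub_cancel_left, hcval, nsmul_eq_mul]
    push_cast
    ring
  refine ⟨fun i => A' i.val, hg.toPerm, ?_, ?_, ?_⟩
  · -- cards
    intro i
    by_cases h : (i : ℕ) < m
    · simp only [hA', if_pos h, Multiset.card_add, Multiset.card_map,
        Multiset.card_singleton]
      have : (univ.filter fun k => ((t k : ℕ) = (i : ℕ))).val.card = 3 := by
        rw [hfil ⟨i, h⟩]
        exact hcard ⟨i, h⟩
      omega
    · simp [hA', h]
  · -- total sum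
    rw [Fin.sum_univ_eq_sum_range (fun n => A' n) (2 * m), two_mul,
      Finset.sum_range_add]
    have h1 : ∑ n ∈ range m, A' n
        = (univ.val.map a) + (Multiset.range m).map (fun j => 5 ^ (j + 2) * (4 * b')) := by
      have hn : ∀ n ∈ range m, A' n
          = ((univ.filter fun k => ((t k : ℕ) = n)).val.map a)
            + {5 ^ (n + 2) * (4 * b')} := by
        intro n hn
        rw [hA']
        simp [Finset.mem_range.mp hn]
      rw [Finset.sum_congr rfl hn, Finset.sum_add_distrib]
      congr 1
      · calc ∑ n ∈ range m, ((univ.filter fun k => ((t k : ℕ) = n)).val.map a)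
            = ∑ j : Fin m, ((univ.filter fun k => t k = j).val.map a) := by
              rw [← Fin.sum_univ_eq_sum_range
                (fun n => ((univ.filter fun k => ((t k : ℕ) = n)).val.map a)) m]
              exact Finset.sum_congr rfl fun j _ => by rw [hfil j]
          _ = univ.val.map a := by
              simp_rw [map_eq_sum_singleton]
              exact Finset.sum_fiberwise univ t (fun k => ({a k} : Multiset ℤ))
      · rw [← Finset.range_val, map_eq_sum_singleton]
    have h2 : ∑ n ∈ range m, A' (m + n)
        = (Multiset.range m).bind
            (fun j => Multiset.replicate 4 ((5 ^ (j + 2) + 1) * (4 * b') / 4)) := by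
      have hb : (Multiset.range m).bind
            (fun j => Multiset.replicate 4 ((5 ^ (j + 2) + 1) * (4 * b') / 4))
          = ∑ n ∈ range m, Multiset.replicate 4 ((5 ^ (n + 2) + 1) * (4 * b') / 4) := by
        rw [Multiset.bind, Multiset.join, ← Finset.range_val]
        rfl
      rw [hb]
      refine Finset.sum_congr rfl fun n hn => ?_
      simp only [hA']
      rw [if_neg (by omega : ¬ m + n < m), Nat.add_sub_cancel_left]
    rw [h1, h2]
  · -- involution properties
    intro i
    have hfi : (Function.Involutive.toPerm g hg) i = g i := rfl
    have h1 := hgval i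
    have := i.isLt
    refine ⟨?_, ?_, ?_⟩
    · rw [hfi]
      intro hcon
      rw [Fin.ext_iff] at hcon
      by_cases h : (i : ℕ) < m <;> simp [h] at h1 <;> omega
    · show g (g i) = i
      exact hg i
    · rw [hfi]
      show (A' (i : ℕ)).sum = (A' ((g i : Fin (2*m)) : ℕ)).sum
      by_cases h : (i : ℕ) < m
      · rw [if_pos h] at h1
        rw [show ((g i : ℕ)) = m + (i : ℕ) from h1]
        exact hAsum (i : ℕ) h
      · rw [if_neg h] at h1
        rw [show ((g i : ℕ)) = (i : ℕ) - m from h1]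
        have h3 : (i : ℕ) = m + ((i : ℕ) - m) := by omega
        rw [show (A' (i : ℕ)) = A' (m + ((i : ℕ) - m)) from by rw [← h3]]
        exact (hAsum ((i : ℕ) - m) (by omega)).symm
end

section
/- Let S be a quadruplet of the form {b(j), b(j+1), c(j), x} where b(j) = 5^{j+1}B, c(j) = (5^{j+1}+1)B/4, 4 | B, B > 0, and x is either an integer with B/4 < x < B/2 or some c(k). Then there is no quadruplet S' of the form {c(j+2), y₁, y₂, y₃} with each y_t an integer satisfying B/4 < y_t < B/2, such that s(S) = s(S'). -/
open Finset

/-- A quadruplet `S = {b(j), b(j+1), c(j), x}` with `x` of type (a) or (c) can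
never have the same sum as a quadruplet `S' = {c(j+2), y₁, y₂, y₃}` with all
`y_t` of type (a); here `b(j) = 5^(j+1)·B`, `c(j) = (5^(j+1)+1)·B/4`,
type-(a) values lie strictly between `B/4` and `B/2`, `4 ∣ B`, `B > 0`, `j ≥ 1`. -/
theorem stmt17 (m : ℕ) (B : ℤ) (hB : 0 < B) (h4 : (4 : ℤ) ∣ B)
    (j : ℕ) (hj : 1 ≤ j) (x : ℤ)
    (hx : (B / 4 < x ∧ x < B / 2) ∨
          ∃ k, 1 ≤ k ∧ k ≤ m ∧ x = (5 ^ (k + 1) + 1) * B / 4)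
    (y : Fin 3 → ℤ) (hy : ∀ t, B / 4 < y t ∧ y t < B / 2) :
    5 ^ (j + 1) * B + 5 ^ (j + 2) * B + (5 ^ (j + 1) + 1) * B / 4 + x ≠
      (5 ^ (j + 3) + 1) * B / 4 + ∑ t, y t := by
  obtain ⟨b, rfl⟩ := h4
  have hb : 0 < b := by linarith
  have e : ∀ c : ℤ, (c + 1) * (4 * b) / 4 = (c + 1) * b := by
    intro c
    rw [show (c + 1) * (4 * b) = 4 * ((c + 1) * b) by ring,
      Int.mul_ediv_cancel_left _ (by norm_num)]
  have hd2 : 4 * b / 2 = 2 * b := by omega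
  have hd4 : 4 * b / 4 = b := by omega
  have hy1 := hy 0; have hy2 := hy 1; have hy3 := hy 2
  rw [hd2, hd4] at hy1 hy2 hy3
  rw [Fin.sum_univ_three, e, e]
  intro heq
  have hp2 : (5:ℤ) ^ (j + 2) = 5 * 5 ^ (j + 1) := by ring
  have hp3 : (5:ℤ) ^ (j + 3) = 25 * 5 ^ (j + 1) := by ring
  rw [hp2, hp3] at heq
  have hx' : x = y 0 + y 1 + y 2 := by linarith
  rcases hx with ⟨h1, h2⟩ | ⟨k, hk1, _, rfl⟩
  · rw [hd4] at h1; rw [hd2] at h2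
    linarith
  · rw [e] at hx'
    have h25 : (25:ℤ) ≤ 5 ^ (k + 1) := by
      calc (25:ℤ) = 5 ^ 2 := by norm_num
      _ ≤ 5 ^ (k + 1) := pow_le_pow_right₀ (by norm_num) (by omega)
    nlinarith
end
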